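/- arXiv:1802.01508 — 2 statements merged into one kernel-verified Lean document; each statement's English description precedes it below -/
import Mathlib

section
/- The set L_ex from the block construction satisfies the 'long finite progressions' property: for every n ≥ 0 there exists c_n ≥ 0 such that c_n + i ∈ L_ex for all 0 ≤ i ≤ n (i.e., L_ex contains arbitrarily long runs of consecutive integers), yet L_ex contains no infinite arithmetic progression. -/
/-- n ∈ LexLang iff n ≥ 1 and the unique block index k ≥ 1 with
    k(k-1)/2 < n ≤ k(k+1)/2 is odd. -/
def LexLang : Set ℕ :=
  {n | ∃ k : ℕ, 1 ≤ k ∧ Odd k ∧ k * (k - 1) / 2 < n ∧ n ≤ k * (k + 1) / 2}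

/-- Triangular numbers. -/
def TriA (m : ℕ) : ℕ := m * (m + 1) / 2

lemma two_mul_TriA (m : ℕ) : 2 * TriA m = m * (m + 1) := by
  unfold TriA
  exact Nat.mul_div_cancel' (even_iff_two_dvd.mp (Nat.even_mul_succ_self m))

lemma TriA_mono {a b : ℕ} (h : a ≤ b) : TriA a ≤ TriA b := by
  have := two_mul_TriA a
  have := two_mul_TriA b
  nlinarith

lemma TriA_succ (m : ℕ) : TriA (m + 1) = TriA m + (m + 1) := by
  have := two_mul_TriA m
  have := two_mul_TriA (m + 1)
  nlinarith

lemma pred_tri {k : ℕ} (h : 1 ≤ k) : k * (k - 1) / 2 = TriA (k - 1) := by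
  obtain ⟨m, rfl⟩ := Nat.exists_eq_add_of_le h
  simp only [TriA, Nat.add_sub_cancel_left]
  rw [Nat.mul_comm, Nat.add_comm]

lemma blocks_disjoint {a b n : ℕ} (h1 : TriA a < n) (h2 : n ≤ TriA (a + 1))
    (h3 : TriA b < n) (h4 : n ≤ TriA (b + 1)) : a = b := by
  by_contra hne
  rcases Nat.lt_or_ge a b with h | h
  · have : TriA (a + 1) ≤ TriA b := TriA_mono h
    omega
  · have hb : b < a := lt_of_le_of_ne h (Ne.symm hne)
    have : TriA (b + 1) ≤ TriA a := TriA_mono hb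
    omega

lemma mem_lex_iff {n : ℕ} :
    n ∈ LexLang ↔ ∃ k : ℕ, 1 ≤ k ∧ Odd k ∧ TriA (k - 1) < n ∧ n ≤ TriA k := by
  constructor
  · rintro ⟨k, hk, hodd, h1, h2⟩
    exact ⟨k, hk, hodd, by rwa [pred_tri hk] at h1, h2⟩
  · rintro ⟨k, hk, hodd, h1, h2⟩
    exact ⟨k, hk, hodd, by rwa [pred_tri hk], h2⟩

/-- LexLang contains arbitrarily long runs of consecutive integers,
    but no infinite arithmetic progression. -/
theorem Lex_long_runs_but_no_infinite_AP :
    (∀ n : ℕ, ∃ c : ℕ, ∀ i : ℕ, i ≤ n → c + i ∈ LexLang) ∧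
    (∀ b : ℕ, 1 ≤ b → ∀ c : ℕ, ¬ (∀ i : ℕ, b * i + c ∈ LexLang)) := by
  constructor
  · intro n
    set k := 2 * n + 1 with hk
    refine ⟨TriA (k - 1) + 1, fun i hi => ?_⟩
    rw [mem_lex_iff]
    refine ⟨k, by omega, ⟨n, by omega⟩, by omega, ?_⟩
    have h : TriA k = TriA (k - 1) + k := by
      have h1 := TriA_succ (k - 1)
      have h2 : k - 1 + 1 = k := by omega
      rw [h2] at h1
      omega
    omega
  · intro b hb c h
    set k := 2 * (b + c + 1) with hk
    have hk1 : 1 ≤ k := by omega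
    have hksucc : TriA k = TriA (k - 1) + k := by
      have h1 := TriA_succ (k - 1)
      have h2 : k - 1 + 1 = k := by omega
      rw [h2] at h1
      omega
    have hck : c ≤ TriA (k - 1) := by
      have : TriA (b + c + 1) ≤ TriA (k - 1) := TriA_mono (by omega)
      have h2 := two_mul_TriA (b + c + 1)
      nlinarith
    set d := TriA (k - 1) - c with hd
    set i := d / b + 1 with hi
    have hdiv1 : b * (d / b) ≤ d := Nat.mul_div_le d b
    have hdiv2 : d < b * (d / b) + b := by
      have h1 := Nat.div_add_mod d b
      have h2 : d % b < b := Nat.mod_lt d (by omega)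
      omega
    set n := b * i + c with hn
    have hlo : TriA (k - 1) < n := by
      have : b * i = b * (d / b) + b := by rw [hi]; ring
      omega
    have hhi : n ≤ TriA k := by
      have h1 : b * i = b * (d / b) + b := by rw [hi]; ring
      have h2 : b ≤ k := by omega
      omega
    obtain ⟨k', hk', hodd, h1, h2⟩ := mem_lex_iff.mp (h i)
    have heq : k' - 1 = k - 1 := by
      apply blocks_disjoint h1 (by rwa [Nat.sub_add_cancel hk']) hlo
      rwa [Nat.sub_add_cancel hk1]
    have : k' = k := by omega
    subst this
    exact Nat.not_odd_iff_even.mpr ⟨b + c + 1, by omega⟩ hodd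
end

section
/- Let L = {a^{4i+1} | i ≥ 0} ∪ {a^{4^i} | i ≥ 1}, viewed as a subset S = {4i+1 | i ≥ 0} ∪ {4^i | i ≥ 1} of ℕ. Then S contains the infinite arithmetic progression {4i+1 | i ≥ 0}, its complement in ℕ contains the infinite arithmetic progression {4i+2 | i ≥ 0}, and S is not eventually periodic (i.e., L is not regular). -/
/-! The residues 1 and 0 mod 4 separate the two parts of `S`, so `4i + 2 ∉ S` and the only
multiples of 4 in `S` are the powers `4 ^ i`. These have unbounded gaps: if `S` were eventually
periodic with period `p`, then together with a large `4 ^ k` it would contain `4 ^ k + 4p`, a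
multiple of 4 strictly between `4 ^ k` and `4 ^ (k + 1)`. -/

def unionLang : Set ℕ :=
  {n | ∃ i : ℕ, n = 4 * i + 1} ∪ {n | ∃ i : ℕ, 1 ≤ i ∧ n = 4 ^ i}

lemma mod_four_of_mem_unionLang {n : ℕ} (hn : n ∈ unionLang) : n % 4 = 1 ∨ 4 ∣ n := by
  rcases hn with ⟨i, rfl⟩ | ⟨i, hi, rfl⟩
  · omega
  · exact Or.inr (dvd_pow_self 4 (by omega))

lemma pow_four_mem_unionLang {k : ℕ} (hk : 1 ≤ k) : 4 ^ k ∈ unionLang :=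
  Or.inr ⟨k, hk, rfl⟩

lemma pow_four_add_four_mul_notMem_unionLang {k p : ℕ} (hp : 1 ≤ p) (hpk : 4 * p < 3 * 4 ^ k) :
    4 ^ k + 4 * p ∉ unionLang := by
  rintro (⟨i, hi⟩ | ⟨j, -, hj⟩)
  · have : 4 ∣ 4 ^ k := dvd_pow_self 4 (by rintro rfl; omega)
    omega
  · have hkj : k < j := (pow_lt_pow_iff_right₀ (by norm_num : 1 < 4)).1 (by omega)
    have hjk : j < k + 1 :=
      (pow_lt_pow_iff_right₀ (by norm_num : 1 < 4)).1 (by rw [pow_succ]; omega)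
    omega

lemma Set.mem_iff_add_mul_mem_of_periodic {S : Set ℕ} {p N : ℕ}
    (h : ∀ n ≥ N, (n ∈ S ↔ n + p ∈ S)) (m : ℕ) : ∀ n ≥ N, (n ∈ S ↔ n + m * p ∈ S) := by
  induction m with
  | zero => simp
  | succ m ih =>
    intro n hn
    rw [ih n hn, h (n + m * p) (by omega), add_mul, one_mul, add_assoc]

lemma Set.not_eventually_periodic_of_gaps {S : Set ℕ}
    (h : ∀ p ≥ 1, ∀ N, ∃ n ≥ N, ∃ m, n ∈ S ∧ n + m * p ∉ S) :
    ¬ ∃ p : ℕ, 1 ≤ p ∧ ∃ N : ℕ, ∀ n ≥ N, (n ∈ S ↔ n + p ∈ S) := by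
  rintro ⟨p, hp, N, hN⟩
  obtain ⟨n, hn, m, hnS, hnmS⟩ := h p hp N
  exact hnmS ((Set.mem_iff_add_mul_mem_of_periodic hN m n hn).1 hnS)

lemma unionLang_has_gaps (p : ℕ) (hp : 1 ≤ p) (N : ℕ) :
    ∃ n ≥ N, ∃ m, n ∈ unionLang ∧ n + m * p ∉ unionLang := by
  set k := N + 4 * p
  have hk : k < 4 ^ k := Nat.lt_pow_self (by norm_num)
  refine ⟨4 ^ k, by omega, 4, pow_four_mem_unionLang (by omega), ?_⟩
  exact pow_four_add_four_mul_notMem_unionLang (k := k) hp (by omega)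

/-- S = {4i+1 | i ≥ 0} ∪ {4^i | i ≥ 1} contains an infinite AP, its complement
    contains an infinite AP, but S is not eventually periodic. -/
theorem union_lang_separating :
    letI S : Set ℕ :=
      {n | ∃ i : ℕ, n = 4 * i + 1} ∪ {n | ∃ i : ℕ, 1 ≤ i ∧ n = 4 ^ i}
    (∀ i : ℕ, 4 * i + 1 ∈ S) ∧
    (∀ i : ℕ, 4 * i + 2 ∈ Sᶜ) ∧
    ¬ (∃ p : ℕ, 1 ≤ p ∧ ∃ N : ℕ, ∀ n ≥ N, (n ∈ S ↔ n + p ∈ S)) := by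
  show (∀ i : ℕ, 4 * i + 1 ∈ unionLang) ∧ (∀ i : ℕ, 4 * i + 2 ∈ unionLangᶜ) ∧
    ¬ (∃ p : ℕ, 1 ≤ p ∧ ∃ N : ℕ, ∀ n ≥ N, (n ∈ unionLang ↔ n + p ∈ unionLang))
  refine ⟨fun i => Or.inl ⟨i, rfl⟩, fun i hi => ?_,
    Set.not_eventually_periodic_of_gaps unionLang_has_gaps⟩
  have := mod_four_of_mem_unionLang hi
  omega
end
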